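/- (Corollary, retrieval-restricted sample complexity.) Let (Ω, ℱ, P), a set U, Y ⊆ U, τ ∈ ℝ, γ > 0, and θ with the margin property be given. Let C : Ω → Finset U be a measurable random candidate pool with |C(ω)| ≤ K for all ω and K ≥ 1, with P(¬(Y ⊆ C(ω))) ≤ ε_ret. Let θ̂ be a measurable random estimated score, n ≥ 1, and σ > 0 such that for every t > 0, P(max_{c ∈ C(ω)} |θ̂(ω)(c) − θ(c)| > t) ≤ 2·K·exp(−n t² / (2σ²)). Fix δ ∈ (0,1) with δ > ε_ret. If n ≥ (2σ²/γ²)·log(2K/(δ − ε_ret)), then the retrieval-restricted predictor Ŷ_RASC(ω) := {c ∈ C(ω) : θ̂(ω)(c) ≥ τ} satisfies P(Ŷ_RASC(ω) ≠ Y) ≤ δ. -/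
import Mathlib


open MeasureTheory

/-- Corollary, retrieval-restricted sample complexity: if `δ > ε_ret` and
`n ≥ (2σ²/γ²)·log(2K/(δ − ε_ret))`, the retrieval-restricted predictor
`Ŷ_RASC(ω) = {c ∈ C(ω) : θ̂(ω)(c) ≥ τ}` achieves exact recovery of `Y`
with failure probability at most `δ`. -/
theorem rasc_sample_complexity
    {Ω : Type*} [MeasurableSpace Ω] (P : Measure Ω) [IsProbabilityMeasure P]
    {U : Type*} (Y : Set U) (θ : U → ℝ) (τ γ : ℝ) (hγ : 0 < γ)
    (hmargin_in : ∀ c ∈ Y, τ + γ ≤ θ c)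
    (hmargin_out : ∀ c ∉ Y, θ c ≤ τ - γ)
    (C : Ω → Finset U) (K : ℕ) (hK1 : 1 ≤ K) (hK : ∀ ω, (C ω).card ≤ K)
    (hCmeas : ∀ c : U, MeasurableSet {ω | c ∈ C ω})
    (εret : ℝ) (hεret : 0 ≤ εret)
    (hmiss : P {ω | ¬ Y ⊆ ↑(C ω)} ≤ ENNReal.ofReal εret)
    (θhat : Ω → U → ℝ)
    (hmeas : ∀ c : U, Measurable fun ω => θhat ω c)
    (n : ℕ) (hn : 1 ≤ n) (σ : ℝ) (hσ : 0 < σ)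
    (hconc : ∀ t : ℝ, 0 < t →
      P {ω | ∃ c ∈ C ω, t < |θhat ω c - θ c|} ≤
        ENNReal.ofReal (2 * (K : ℝ) * Real.exp (-((n : ℝ) * t ^ 2) / (2 * σ ^ 2))))
    (δ : ℝ) (hδ0 : 0 < δ) (hδ1 : δ < 1) (hδε : εret < δ)
    (hsample : (2 * σ ^ 2 / γ ^ 2) * Real.log (2 * (K : ℝ) / (δ - εret)) ≤ (n : ℝ)) :
    P {ω | {c : U | c ∈ C ω ∧ τ ≤ θhat ω c} ≠ Y} ≤ ENNReal.ofReal δ := by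
  set D := δ - εret with hDdef
  have hD0 : 0 < D := by simp only [hDdef]; linarith
  have hK0 : (0:ℝ) < (K:ℝ) := by exact_mod_cast hK1
  have h2σ : (0:ℝ) < 2 * σ ^ 2 := by positivity
  have hγ2 : (0:ℝ) < γ ^ 2 := by positivity
  -- bound at t = γ
  have hfγ : 2 * (K:ℝ) * Real.exp (-((n:ℝ) * γ ^ 2) / (2 * σ ^ 2)) ≤ D := by
    have hq : (0:ℝ) < 2 * (K:ℝ) / D := by positivity
    have hlog : Real.log (2 * (K:ℝ) / D) ≤ (n:ℝ) * γ ^ 2 / (2 * σ ^ 2) := by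
      rw [le_div_iff₀ h2σ]
      calc Real.log (2 * (K:ℝ) / D) * (2 * σ ^ 2)
          = (2 * σ ^ 2 / γ ^ 2) * Real.log (2 * (K:ℝ) / D) * γ ^ 2 := by
            field_simp
        _ ≤ (n:ℝ) * γ ^ 2 := by
            apply mul_le_mul_of_nonneg_right hsample (le_of_lt hγ2)
    have hexp : Real.exp (-((n:ℝ) * γ ^ 2) / (2 * σ ^ 2)) ≤ D / (2 * (K:ℝ)) := by
      have : Real.exp (-((n:ℝ) * γ ^ 2) / (2 * σ ^ 2)) ≤
          Real.exp (-Real.log (2 * (K:ℝ) / D)) := by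
        apply Real.exp_le_exp.mpr
        rw [neg_div]
        linarith
      calc Real.exp (-((n:ℝ) * γ ^ 2) / (2 * σ ^ 2))
          ≤ Real.exp (-Real.log (2 * (K:ℝ) / D)) := this
        _ = D / (2 * (K:ℝ)) := by
            rw [Real.exp_neg, Real.exp_log hq, inv_div]
    calc 2 * (K:ℝ) * Real.exp (-((n:ℝ) * γ ^ 2) / (2 * σ ^ 2))
        ≤ 2 * (K:ℝ) * (D / (2 * (K:ℝ))) := by
          apply mul_le_mul_of_nonneg_left hexp (by positivity)
      _ = D := by field_simp
  -- key bound for all t ∈ (0, γ)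
  have key : ∀ t ∈ Set.Ioo (0:ℝ) γ,
      P {ω | {c : U | c ∈ C ω ∧ τ ≤ θhat ω c} ≠ Y} ≤
        ENNReal.ofReal εret +
          ENNReal.ofReal (2 * (K:ℝ) * Real.exp (-((n:ℝ) * t ^ 2) / (2 * σ ^ 2))) := by
    intro t ht
    have hsub : {ω | {c : U | c ∈ C ω ∧ τ ≤ θhat ω c} ≠ Y} ⊆
        {ω | ¬ Y ⊆ ↑(C ω)} ∪ {ω | ∃ c ∈ C ω, t < |θhat ω c - θ c|} := by
      intro ω hω
      by_contra hc
      rw [Set.mem_union] at hc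
      push_neg at hc
      obtain ⟨h1, h2⟩ := hc
      simp only [Set.mem_setOf_eq, not_not, not_exists, not_lt] at h1 h2
      push_neg at h2
      apply hω
      ext c
      constructor
      · rintro ⟨hcC, hτ⟩
        by_contra hcY
        have hb := h2 c hcC
        rw [abs_le] at hb
        have := hmargin_out c hcY
        linarith [ht.2, hb.2]
      · intro hcY
        have hcC : c ∈ C ω := h1 hcY
        refine ⟨hcC, ?_⟩
        have hb := h2 c hcC
        rw [abs_le] at hb
        have := hmargin_in c hcY
        linarith [ht.2.le, hb.1]
    calc P {ω | {c : U | c ∈ C ω ∧ τ ≤ θhat ω c} ≠ Y}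
        ≤ P ({ω | ¬ Y ⊆ ↑(C ω)} ∪ {ω | ∃ c ∈ C ω, t < |θhat ω c - θ c|}) :=
          measure_mono hsub
      _ ≤ P {ω | ¬ Y ⊆ ↑(C ω)} + P {ω | ∃ c ∈ C ω, t < |θhat ω c - θ c|} :=
          measure_union_le _ _
      _ ≤ ENNReal.ofReal εret +
          ENNReal.ofReal (2 * (K:ℝ) * Real.exp (-((n:ℝ) * t ^ 2) / (2 * σ ^ 2))) :=
          add_le_add hmiss (hconc t ht.1)
  -- take the limit t → γ⁻
  have hcont : Continuous
      (fun t : ℝ => 2 * (K:ℝ) * Real.exp (-((n:ℝ) * t ^ 2) / (2 * σ ^ 2))) := by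
    fun_prop
  have htend : Filter.Tendsto
      (fun t : ℝ => ENNReal.ofReal εret +
        ENNReal.ofReal (2 * (K:ℝ) * Real.exp (-((n:ℝ) * t ^ 2) / (2 * σ ^ 2))))
      (nhdsWithin γ (Set.Iio γ))
      (nhds (ENNReal.ofReal εret +
        ENNReal.ofReal (2 * (K:ℝ) * Real.exp (-((n:ℝ) * γ ^ 2) / (2 * σ ^ 2))))) := by
    apply Filter.Tendsto.mono_left _ nhdsWithin_le_nhds
    exact Filter.Tendsto.add tendsto_const_nhds
      ((ENNReal.continuous_ofReal.tendsto _).comp (hcont.tendsto γ))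
  have hev : ∀ᶠ t in nhdsWithin γ (Set.Iio γ), t ∈ Set.Ioo (0:ℝ) γ :=
    Filter.eventually_of_mem (Ioo_mem_nhdsLT_of_mem (Set.right_mem_Ioc.mpr hγ)) fun t h => h
  have hlim : P {ω | {c : U | c ∈ C ω ∧ τ ≤ θhat ω c} ≠ Y} ≤
      ENNReal.ofReal εret +
        ENNReal.ofReal (2 * (K:ℝ) * Real.exp (-((n:ℝ) * γ ^ 2) / (2 * σ ^ 2))) :=
    ge_of_tendsto htend (hev.mono fun t ht => key t ht)
  calc P {ω | {c : U | c ∈ C ω ∧ τ ≤ θhat ω c} ≠ Y}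
      ≤ ENNReal.ofReal εret +
        ENNReal.ofReal (2 * (K:ℝ) * Real.exp (-((n:ℝ) * γ ^ 2) / (2 * σ ^ 2))) := hlim
    _ ≤ ENNReal.ofReal εret + ENNReal.ofReal D :=
        add_le_add le_rfl (ENNReal.ofReal_le_ofReal hfγ)
    _ = ENNReal.ofReal δ := by
        rw [← ENNReal.ofReal_add hεret hD0.le]
        congr 1
        simp only [hDdef]; ring
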